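/- Let d ≥ 1, let U be a unitary operator on ℂ^d, and let {ν_i}_{i=0}^{d²-1} be an orthonormal basis of ℂ^d ⊗ ℂ^d such that |⟨ν_i, (U ⊗ I) ν_i⟩| = 1/d for every index i. Then |Tr U| ≤ 1. -/

import Mathlib

/-!
Computing the trace of `U ⊗ I` in the basis `ν` gives `d · Tr U = ∑ᵢ ⟨νᵢ, (U ⊗ I) νᵢ⟩`,
a sum of `d²` terms of modulus `1/d`; hence `d · |Tr U| ≤ d`.
-/

open scoped ComplexInnerProductSpace Matrix Kronecker

noncomputable section

/-- Action of a matrix indexed by `Fin d × Fin d` on `ℂ^d ⊗ ℂ^d`. -/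
def act2 {d : ℕ} (M : Matrix (Fin d × Fin d) (Fin d × Fin d) ℂ)
    (ψ : EuclideanSpace ℂ (Fin d × Fin d)) : EuclideanSpace ℂ (Fin d × Fin d) :=
  Matrix.toEuclideanLin M ψ

open scoped InnerProductSpace

namespace Matrix

variable {𝕜 n : Type*} [RCLike 𝕜] [Fintype n] [DecidableEq n]

theorem trace_toEuclideanLin (M : Matrix n n 𝕜) :
    LinearMap.trace 𝕜 (EuclideanSpace 𝕜 n) (toEuclideanLin M) = M.trace := by
  rw [LinearMap.trace_eq_matrix_trace 𝕜 (PiLp.basisFun 2 𝕜 n)]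
  exact congrArg trace (LinearMap.toMatrix_toLin _ _ M)

theorem trace_eq_sum_inner_toEuclideanLin (M : Matrix n n 𝕜)
    (b : OrthonormalBasis n 𝕜 (EuclideanSpace 𝕜 n)) :
    M.trace = ∑ i, ⟪b i, toEuclideanLin M (b i)⟫_𝕜 := by
  rw [← trace_toEuclideanLin, LinearMap.trace_eq_sum_inner _ b]

theorem norm_trace_le_of_norm_inner_le (M : Matrix n n 𝕜)
    (b : OrthonormalBasis n 𝕜 (EuclideanSpace 𝕜 n)) {c : ℝ}
    (h : ∀ i, ‖⟪b i, toEuclideanLin M (b i)⟫_𝕜‖ ≤ c) :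
    ‖M.trace‖ ≤ Fintype.card n * c := by
  calc ‖M.trace‖ = ‖∑ i, ⟪b i, toEuclideanLin M (b i)⟫_𝕜‖ := by
        rw [trace_eq_sum_inner_toEuclideanLin M b]
    _ ≤ ∑ i, ‖⟪b i, toEuclideanLin M (b i)⟫_𝕜‖ := norm_sum_le _ _
    _ ≤ ∑ _i : n, c := Finset.sum_le_sum fun i _ => h i
    _ = Fintype.card n * c := by rw [Finset.sum_const, Finset.card_univ, nsmul_eq_mul]

theorem trace_kronecker_one {R m : Type*} [CommSemiring R] [Fintype m] (A : Matrix m m R) :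
    trace (A ⊗ₖ (1 : Matrix n n R)) = Fintype.card n * trace A := by
  rw [trace_kronecker, trace_one, mul_comm]

end Matrix

theorem stmt_12_general {d : ℕ} (hd : 1 ≤ d)
    (U : Matrix (Fin d) (Fin d) ℂ)
    (ν : OrthonormalBasis (Fin d × Fin d) ℂ (EuclideanSpace ℂ (Fin d × Fin d)))
    (h : ∀ i : Fin d × Fin d,
      ‖⟪ν i, act2 (U ⊗ₖ (1 : Matrix (Fin d) (Fin d) ℂ)) (ν i)⟫‖ = 1 / d) :
    ‖Matrix.trace U‖ ≤ 1 := by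
  have hd_pos : (0 : ℝ) < d := Nat.cast_pos.mpr hd
  have hbound := Matrix.norm_trace_le_of_norm_inner_le _ ν fun i => (h i).le
  rw [Matrix.trace_kronecker_one, norm_mul, Complex.norm_natCast, Fintype.card_prod,
    Fintype.card_fin, Nat.cast_mul, mul_assoc, mul_one_div_cancel hd_pos.ne', mul_one] at hbound
  exact le_of_mul_le_mul_left (by rwa [mul_one]) hd_pos

theorem stmt_12 {d : ℕ} (hd : 1 ≤ d)
    (U : Matrix (Fin d) (Fin d) ℂ)
    (hU : U ∈ Matrix.unitaryGroup (Fin d) ℂ)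
    (ν : OrthonormalBasis (Fin d × Fin d) ℂ (EuclideanSpace ℂ (Fin d × Fin d)))
    (h : ∀ i : Fin d × Fin d,
      ‖⟪ν i, act2 (U ⊗ₖ (1 : Matrix (Fin d) (Fin d) ℂ)) (ν i)⟫‖ = 1 / d) :
    ‖Matrix.trace U‖ ≤ 1 :=
  stmt_12_general hd U ν h
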